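/- arXiv:1409.3666 — 8 statements merged into one kernel-verified Lean document; each statement's English description precedes it below -/
import Mathlib

section
/- For every (a₁,...,a_m) ∈ {0,...,b−1}^m, the point of the folded Hammersley point set P_{m,τ_n} indexed by (a₁,...,a_m) coincides with the point of the digital net generated by C₁ and C₂ indexed by (a₁,...,a_m); that is, P_{m,τ_n} is the two-dimensional digital net over Z_b with generating matrices C₁ and C₂. -/
open scoped BigOperators

/-- Subtraction modulo `b` on `{0, ..., b-1}` (`x ⊖ y`). -/
def bsub (b x y : ℕ) : ℕ := (x + b - y) % b

/-- The point of the folded Hammersley point set `P_{m,τ_n}` in base `b`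
indexed by `(a₁, ..., a_m) ∈ {0, ..., b-1}^m`. -/
noncomputable def foldedHammersleyPoint (b m n : ℕ) (a : Fin m → Fin b) : ℝ × ℝ :=
  (∑ i ∈ Finset.Icc 1 n,
      (bsub b (if h : i < m then (a ⟨i, h⟩ : ℕ) else 0)
              (if h : 0 < m then (a ⟨0, h⟩ : ℕ) else 0) : ℝ) / (b : ℝ) ^ i,
   ∑ i ∈ Finset.Icc 1 n,
      (bsub b (if h : 0 < m ∧ i ≤ m - 1 then (a ⟨m - 1 - i, by omega⟩ : ℕ) else 0)
              (if h : 0 < m then (a ⟨m - 1, by omega⟩ : ℕ) else 0) : ℝ) / (b : ℝ) ^ i)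

/-- Generating matrix `C₁` of the folded Hammersley point set: rows are 0-indexed, row
`i` being row `l = i + 1` of the paper.  For `1 ≤ l ≤ m - 1` the row has entry `b - 1`
in column `1` and entry `1` in column `l + 1` (1-indexed); for `m ≤ l ≤ n` it has entry
`b - 1` in column `1`; all other entries are zero. -/
def fhC1 (b m n : ℕ) : Matrix (Fin n) (Fin m) (ZMod b) := fun i j =>
  if (j : ℕ) = 0 then ((b - 1 : ℕ) : ZMod b)
  else if (i : ℕ) + 2 ≤ m ∧ (j : ℕ) = (i : ℕ) + 1 then 1 else 0

/-- Generating matrix `C₂` of the folded Hammersley point set: rows are 0-indexed, row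
`i` being row `l = i + 1` of the paper.  For `1 ≤ l ≤ m - 1` the row has entry `1` in
column `m - l` and entry `b - 1` in column `m` (1-indexed); for `m ≤ l ≤ n` it has entry
`b - 1` in column `m`; all other entries are zero. -/
def fhC2 (b m n : ℕ) : Matrix (Fin n) (Fin m) (ZMod b) := fun i j =>
  if (j : ℕ) + 1 = m then ((b - 1 : ℕ) : ZMod b)
  else if (i : ℕ) + 2 ≤ m ∧ (j : ℕ) + 2 + (i : ℕ) = m then 1 else 0

/-- The point of the two-dimensional digital net over `ZMod b` with generating
matrices `C₁, C₂` indexed by `(a₁, ..., a_m) ∈ {0, ..., b-1}^m`. -/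
noncomputable def digitalNetPoint (b m n : ℕ) (C1 C2 : Matrix (Fin n) (Fin m) (ZMod b))
    (a : Fin m → Fin b) : ℝ × ℝ :=
  (∑ i : Fin n, ((Matrix.mulVec C1 (fun j => ((a j : ℕ) : ZMod b)) i).val : ℝ) /
      (b : ℝ) ^ ((i : ℕ) + 1),
   ∑ i : Fin n, ((Matrix.mulVec C2 (fun j => ((a j : ℕ) : ZMod b)) i).val : ℝ) /
      (b : ℝ) ^ ((i : ℕ) + 1))

/-! Over `ZMod b` the entry `b - 1` is `-1`, so row `i` of `C₁` is `e_{i+1} - e_0` and the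
`i`-th digit of `C₁ a` is `a_{i+2} - a_1` (with `a_k = 0` for `k > m`), which reduced into
`{0, ..., b-1}` is `a_{i+2} ⊖ a_1`. The matrix `C₂` is `C₁` with its columns reversed, matching the
fact that the second coordinate of the folded point indexed by `a` is the first coordinate of the
point indexed by the reversed tuple. -/

lemma val_natCast_sub_natCast_eq_bsub {b : ℕ} [NeZero b] (x : ℕ) {y : ℕ} (hy : y ≤ b) :
    ((x : ZMod b) - y).val = bsub b x y := by
  rw [← add_zero (x : ZMod b), ← ZMod.natCast_self b, ← Nat.cast_add,
    ← Nat.cast_sub (by omega), ZMod.val_natCast, bsub]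

lemma ZMod.natCast_self_sub_one {b : ℕ} [NeZero b] : ((b - 1 : ℕ) : ZMod b) = -1 := by
  rw [Nat.cast_pred (Nat.pos_of_neZero b), ZMod.natCast_self, zero_sub]

section

variable {b m : ℕ}

/-- The paper's digit `a_{k+1}`, extended by `0` for `k ≥ m`. -/
def paddedDigit (a : Fin m → Fin b) (k : ℕ) : ℕ := if h : k < m then a ⟨k, h⟩ else 0

lemma paddedDigit_le (a : Fin m → Fin b) (k : ℕ) : paddedDigit a k ≤ b := by
  unfold paddedDigit
  split
  · exact (Fin.is_lt _).le
  · exact Nat.zero_le b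

lemma sum_ite_val_eq_paddedDigit {R : Type*} [AddCommMonoidWithOne R] (a : Fin m → Fin b)
    (k : ℕ) : ∑ j : Fin m, (if (j : ℕ) = k then ((a j : ℕ) : R) else 0) = paddedDigit a k := by
  unfold paddedDigit
  split
  case isTrue h =>
    simp_rw [← Fin.ext_iff (b := ⟨k, h⟩), Finset.sum_ite_eq']
    simp
  case isFalse h =>
    refine (Finset.sum_eq_zero fun j _ => if_neg ?_).trans Nat.cast_zero.symm
    omega

lemma sum_Icc_one_eq_sum_fin {M : Type*} [AddCommMonoid M] (n : ℕ) (f : ℕ → M) :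
    ∑ i ∈ Finset.Icc 1 n, f i = ∑ i : Fin n, f (i + 1) := by
  rw [Fin.sum_univ_eq_sum_range (fun i => f (i + 1)), Finset.range_eq_Ico, Finset.sum_Ico_add']
  rfl

lemma fhC1_apply [NeZero b] (n : ℕ) (i : Fin n) (j : Fin m) :
    fhC1 b m n i j = (if (j : ℕ) = i + 1 then 1 else 0) - (if (j : ℕ) = 0 then 1 else 0) := by
  unfold fhC1
  split_ifs <;> first | omega | simp [ZMod.natCast_self_sub_one]

lemma fhC1_mulVec_apply [NeZero b] (n : ℕ) (a : Fin m → Fin b) (i : Fin n) :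
    (fhC1 b m n).mulVec (fun j => ((a j : ℕ) : ZMod b)) i
      = (paddedDigit a (i + 1) : ZMod b) - paddedDigit a 0 := by
  simp only [Matrix.mulVec, dotProduct, fhC1_apply, sub_mul, ite_mul, one_mul, zero_mul,
    Finset.sum_sub_distrib, sum_ite_val_eq_paddedDigit]

lemma foldedHammersleyPoint_fst_eq_digitalNetPoint_fst [NeZero b] (n : ℕ)
    (C₂ : Matrix (Fin n) (Fin m) (ZMod b)) (a : Fin m → Fin b) :
    (foldedHammersleyPoint b m n a).1 = (digitalNetPoint b m n (fhC1 b m n) C₂ a).1 := by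
  change ∑ i ∈ Finset.Icc 1 n, (bsub b (paddedDigit a i) (paddedDigit a 0) : ℝ) / (b : ℝ) ^ i = _
  rw [sum_Icc_one_eq_sum_fin]
  refine Finset.sum_congr rfl fun i _ => ?_
  rw [fhC1_mulVec_apply, val_natCast_sub_natCast_eq_bsub _ (paddedDigit_le a 0)]

lemma fhC2_eq_submatrix_rev (n : ℕ) :
    fhC2 b m n = (fhC1 b m n).submatrix id Fin.revPerm := by
  ext i j
  simp only [fhC1, fhC2, Matrix.submatrix_apply, id, Fin.revPerm_apply, Fin.val_rev]
  split_ifs <;> first | rfl | omega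

lemma foldedHammersleyPoint_snd_eq_fst_rev (n : ℕ) (a : Fin m → Fin b) :
    (foldedHammersleyPoint b m n a).2 = (foldedHammersleyPoint b m n (a ∘ Fin.rev)).1 := by
  simp only [foldedHammersleyPoint]
  refine Finset.sum_congr rfl fun i _ => ?_
  congr 3
  split_ifs <;> try omega
  simp only [Function.comp_apply, Fin.rev]
  congr 3
  omega

lemma digitalNetPoint_snd_submatrix_rev (n : ℕ) (C₁ C C₂ : Matrix (Fin n) (Fin m) (ZMod b))
    (a : Fin m → Fin b) :
    (digitalNetPoint b m n C₁ (C.submatrix id Fin.revPerm) a).2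
      = (digitalNetPoint b m n C C₂ (a ∘ Fin.rev)).1 := by
  simp only [digitalNetPoint, Matrix.submatrix_mulVec_equiv, Fin.revPerm_symm]
  rfl

end

theorem folded_hammersley_is_digital_net_general (b m n : ℕ) (hb : 2 ≤ b)
    (a : Fin m → Fin b) :
    foldedHammersleyPoint b m n a = digitalNetPoint b m n (fhC1 b m n) (fhC2 b m n) a := by
  have : NeZero b := ⟨by omega⟩
  ext
  · exact foldedHammersleyPoint_fst_eq_digitalNetPoint_fst n _ a
  · rw [foldedHammersleyPoint_snd_eq_fst_rev, fhC2_eq_submatrix_rev,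
      digitalNetPoint_snd_submatrix_rev n _ _ (fhC2 b m n),
      foldedHammersleyPoint_fst_eq_digitalNetPoint_fst]

/-- For every `(a₁, ..., a_m) ∈ {0, ..., b-1}^m`, the point of the
folded Hammersley point set `P_{m,τ_n}` indexed by `(a₁, ..., a_m)` coincides with
the point of the digital net generated by `C₁` and `C₂` indexed by `(a₁, ..., a_m)`;
that is, `P_{m,τ_n}` is the two-dimensional digital net over `ZMod b` with generating
matrices `C₁` and `C₂`. -/
theorem folded_hammersley_is_digital_net (b m n : ℕ) (hb : 2 ≤ b) (hmn : 2 * m ≤ n)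
    (a : Fin m → Fin b) :
    foldedHammersleyPoint b m n a = digitalNetPoint b m n (fhC1 b m n) (fhC2 b m n) a :=
  folded_hammersley_is_digital_net_general b m n hb a
end

section
/- For every integer r with 0 ≤ r ≤ m−1, the m−1 vectors c_{1,1},...,c_{1,r}, c_{2,1},...,c_{2,m−1−r} are linearly independent over Z_b. -/
/-- For every integer `r` with `0 ≤ r ≤ m - 1`, the `m - 1` vectors
`c_{1,1}, ..., c_{1,r}, c_{2,1}, ..., c_{2,m-1-r}` (where `c_{j,l}` is the `l`-th row,
1-indexed, of the generating matrix `C_j` of the folded Hammersley point set) are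
linearly independent over `ZMod b`. -/
theorem folded_hammersley_rows_indep_one (b m n : ℕ) (hb : 2 ≤ b) (hm : 1 ≤ m)
    (hmn : 2 * m ≤ n) (r : ℕ) (hr : r + 1 ≤ m) :
    LinearIndependent (ZMod b)
      (Sum.elim
        (fun i : Fin r => fhC1 b m n ⟨(i : ℕ), by have := i.isLt; omega⟩)
        (fun i : Fin (m - 1 - r) => fhC2 b m n ⟨(i : ℕ), by have := i.isLt; omega⟩)) := by
  rw [Fintype.linearIndependent_iff]
  intro g hg
  have hb1 : ((b - 1 : ℕ) : ZMod b) = -1 := by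
    rw [Nat.cast_sub (by omega), Nat.cast_one, ZMod.natCast_self, zero_sub]
  have E : ∀ j : Fin m,
      (∑ i : Fin r, g (Sum.inl i) * fhC1 b m n ⟨(i : ℕ), by have := i.isLt; omega⟩ j)
      + ∑ i : Fin (m - 1 - r), g (Sum.inr i) * fhC2 b m n ⟨(i : ℕ), by have := i.isLt; omega⟩ j = 0 := by
    intro j
    have h := congrFun hg j
    simpa [Fintype.sum_sum_type, Finset.sum_apply, Pi.smul_apply, smul_eq_mul] using h
  have claim1 : ∀ i : Fin r, (i : ℕ) + 1 < r → g (Sum.inl i) = 0 := by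
    intro i hi
    have hi2 := i.isLt
    have hE := E ⟨(i : ℕ) + 1, by omega⟩
    have s1 : (∑ i' : Fin r, g (Sum.inl i') * fhC1 b m n ⟨(i' : ℕ), by have := i'.isLt; omega⟩
        (⟨(i : ℕ) + 1, by omega⟩ : Fin m)) = g (Sum.inl i) := by
      rw [Fintype.sum_eq_single i]
      · simp only [fhC1]
        rw [if_neg (by omega : ¬ ((i : ℕ) + 1 = 0))]
        simp [show (i : ℕ) + 2 ≤ m from by omega]
      · intro i' hne
        have hi' := i'.isLt
        simp only [fhC1]
        rw [if_neg (by omega : ¬ ((i : ℕ) + 1 = 0)), if_neg, mul_zero]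
        rintro ⟨-, h2⟩
        exact hne (Fin.ext (by omega))
    have s2 : (∑ i' : Fin (m - 1 - r), g (Sum.inr i') * fhC2 b m n
        ⟨(i' : ℕ), by have := i'.isLt; omega⟩ (⟨(i : ℕ) + 1, by omega⟩ : Fin m)) = 0 := by
      refine Finset.sum_eq_zero fun i' _ => ?_
      have hi' := i'.isLt
      simp only [fhC2]
      rw [if_neg (by omega : ¬ ((i : ℕ) + 1 + 1 = m)), if_neg, mul_zero]
      rintro ⟨-, h2⟩
      omega
    rw [s1, s2, add_zero] at hE
    exact hE
  have claim2 : ∀ i : Fin (m - 1 - r), (i : ℕ) < m - 2 - r → g (Sum.inr i) = 0 := by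
    intro i hi
    have hi2 := i.isLt
    have hE := E ⟨m - 2 - (i : ℕ), by omega⟩
    have s1 : (∑ i' : Fin r, g (Sum.inl i') * fhC1 b m n ⟨(i' : ℕ), by have := i'.isLt; omega⟩
        (⟨m - 2 - (i : ℕ), by omega⟩ : Fin m)) = 0 := by
      refine Finset.sum_eq_zero fun i' _ => ?_
      have hi' := i'.isLt
      simp only [fhC1]
      rw [if_neg (by omega : ¬ (m - 2 - (i : ℕ) = 0)), if_neg, mul_zero]
      rintro ⟨-, h2⟩
      omega
    have s2 : (∑ i' : Fin (m - 1 - r), g (Sum.inr i') * fhC2 b m n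
        ⟨(i' : ℕ), by have := i'.isLt; omega⟩ (⟨m - 2 - (i : ℕ), by omega⟩ : Fin m))
        = g (Sum.inr i) := by
      rw [Fintype.sum_eq_single i]
      · simp only [fhC2]
        rw [if_neg (by omega : ¬ (m - 2 - (i : ℕ) + 1 = m))]
        rw [if_pos (⟨by omega, by omega⟩ : (i : ℕ) + 2 ≤ m ∧ m - 2 - (i : ℕ) + 2 + (i : ℕ) = m),
          mul_one]
      · intro i' hne
        have hi' := i'.isLt
        simp only [fhC2]
        rw [if_neg (by omega : ¬ (m - 2 - (i : ℕ) + 1 = m)), if_neg, mul_zero]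
        rintro ⟨-, h2⟩
        exact hne (Fin.ext (by omega))
    rw [s1, s2, zero_add] at hE
    exact hE
  rintro (i | i)
  · have hi2 := i.isLt
    by_cases hc : (i : ℕ) + 1 < r
    · exact claim1 i hc
    · have hE := E ⟨0, by omega⟩
      have s1 : (∑ i' : Fin r, g (Sum.inl i') * fhC1 b m n ⟨(i' : ℕ), by have := i'.isLt; omega⟩
          (⟨0, by omega⟩ : Fin m)) = (∑ i' : Fin r, g (Sum.inl i')) * -1 := by
        rw [Finset.sum_mul]
        refine Finset.sum_congr rfl fun i' _ => ?_
        simp only [fhC1]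
        simp [hb1]
      have s2 : (∑ i' : Fin (m - 1 - r), g (Sum.inr i') * fhC2 b m n
          ⟨(i' : ℕ), by have := i'.isLt; omega⟩ (⟨0, by omega⟩ : Fin m)) = 0 := by
        refine Finset.sum_eq_zero fun i' _ => ?_
        have hi' := i'.isLt
        simp only [fhC2]
        rw [if_neg (by omega : ¬ ((0 : ℕ) + 1 = m)), if_neg, mul_zero]
        rintro ⟨-, h2⟩
        omega
      rw [s1, s2, add_zero, mul_neg_one, neg_eq_zero] at hE
      have hsingle : (∑ i' : Fin r, g (Sum.inl i')) = g (Sum.inl i) := by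
        refine Fintype.sum_eq_single i fun j hj => claim1 j ?_
        have hj' := j.isLt
        have hne : (j : ℕ) ≠ (i : ℕ) := fun h => hj (Fin.ext h)
        omega
      rw [hsingle] at hE
      exact hE
  · have hi2 := i.isLt
    by_cases hc : (i : ℕ) < m - 2 - r
    · exact claim2 i hc
    · have hE := E ⟨m - 1, by omega⟩
      have s1 : (∑ i' : Fin r, g (Sum.inl i') * fhC1 b m n ⟨(i' : ℕ), by have := i'.isLt; omega⟩
          (⟨m - 1, by omega⟩ : Fin m)) = 0 := by
        refine Finset.sum_eq_zero fun i' _ => ?_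
        have hi' := i'.isLt
        simp only [fhC1]
        rw [if_neg (by omega : ¬ (m - 1 = 0)), if_neg, mul_zero]
        rintro ⟨-, h2⟩
        omega
      have s2 : (∑ i' : Fin (m - 1 - r), g (Sum.inr i') * fhC2 b m n
          ⟨(i' : ℕ), by have := i'.isLt; omega⟩ (⟨m - 1, by omega⟩ : Fin m))
          = (∑ i' : Fin (m - 1 - r), g (Sum.inr i')) * -1 := by
        rw [Finset.sum_mul]
        refine Finset.sum_congr rfl fun i' _ => ?_
        simp only [fhC2]
        rw [if_pos (by omega : m - 1 + 1 = m), hb1]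
      rw [s1, s2, zero_add, mul_neg_one, neg_eq_zero] at hE
      have hsingle : (∑ i' : Fin (m - 1 - r), g (Sum.inr i')) = g (Sum.inr i) := by
        refine Fintype.sum_eq_single i fun j hj => claim2 j ?_
        have hj' := j.isLt
        have hne : (j : ℕ) ≠ (i : ℕ) := fun h => hj (Fin.ext h)
        omega
      rw [hsingle] at hE
      exact hE
end

section
/- For every integer r with 1 ≤ r ≤ m−2, the vectors c_{1,1},...,c_{1,m−2}, c_{2,r} are linearly independent over Z_b. -/
/-- **Statement.** For every integer `r` with `1 ≤ r ≤ m - 2`, the vectors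
`c_{1,1}, ..., c_{1,m-2}, c_{2,r}` (where `c_{j,l}` is the `l`-th row, 1-indexed,
of the generating matrix `C_j` of the folded Hammersley point set) are linearly
independent over `ZMod b`. -/
theorem folded_hammersley_rows_indep_two_a (b m n : ℕ) (hb : 2 ≤ b) (hmn : 2 * m ≤ n)
    (r : ℕ) (hr1 : 1 ≤ r) (hr2 : r + 2 ≤ m) :
    LinearIndependent (ZMod b)
      (Sum.elim
        (fun i : Fin (m - 2) => fhC1 b m n ⟨(i : ℕ), by have := i.isLt; omega⟩)
        (fun _ : Unit => fhC2 b m n ⟨r - 1, by omega⟩)) := by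
  have hm : 3 ≤ m := by omega
  have hb1 : ((b - 1 : ℕ) : ZMod b) = -1 := by
    have : ((b : ℕ) : ZMod b) = 0 := ZMod.natCast_self b
    rw [Nat.cast_sub (by omega), this, Nat.cast_one, zero_sub]
  rw [Fintype.linearIndependent_iff]
  intro g hg
  -- evaluate the relation at each column
  have hcol : ∀ j : Fin m,
      (∑ i : Fin (m - 2), g (Sum.inl i) • fhC1 b m n ⟨(i : ℕ), by have := i.isLt; omega⟩ j)
        + g (Sum.inr ()) • fhC2 b m n ⟨r - 1, by omega⟩ j = 0 := by
    intro j
    have h := congrFun hg j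
    rw [Fintype.sum_sum_type] at h
    simpa using h
  -- the coefficient of the C₂ row vanishes
  have hinr : g (Sum.inr ()) = 0 := by
    have h := hcol ⟨m - 1, by omega⟩
    have h1 : ∀ i : Fin (m - 2),
        fhC1 b m n ⟨(i : ℕ), by have := i.isLt; omega⟩ ⟨m - 1, by omega⟩ = 0 := by
      intro i
      have := i.isLt
      simp only [fhC1]
      rw [if_neg (by omega), if_neg (by omega)]
    have h2 : fhC2 b m n ⟨r - 1, by omega⟩ ⟨m - 1, by omega⟩ = -1 := by
      simp only [fhC2]
      rw [if_pos (by omega)]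
      exact hb1
    rw [h2, Finset.sum_eq_zero (fun i _ => by rw [h1 i, smul_zero])] at h
    simpa using h
  intro i
  cases i with
  | inr u => cases u; exact hinr
  | inl k =>
    have hk := k.isLt
    have h := hcol ⟨(k : ℕ) + 1, by omega⟩
    have h1 : ∀ i : Fin (m - 2),
        fhC1 b m n ⟨(i : ℕ), by have := i.isLt; omega⟩ ⟨(k : ℕ) + 1, by omega⟩
          = if i = k then 1 else 0 := by
      intro i
      have := i.isLt
      simp only [fhC1]
      rw [if_neg (by omega)]
      by_cases hik : i = k
      · subst hik
        rw [if_pos ⟨by omega, rfl⟩, if_pos rfl]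
      · rw [if_neg (by simp only [Fin.ext_iff] at hik; omega), if_neg hik]
    rw [hinr, zero_smul, add_zero] at h
    calc g (Sum.inl k) = ∑ i : Fin (m - 2),
            g (Sum.inl i) • fhC1 b m n ⟨(i : ℕ), by have := i.isLt; omega⟩
              ⟨(k : ℕ) + 1, by omega⟩ := by
          rw [Finset.sum_congr rfl (fun i _ => by rw [h1 i])]
          simp
      _ = 0 := h
end

section
/- For every j ∈ {1, 2}, every integer r with 0 ≤ r ≤ m−2, and every integer s with m−1 ≤ s ≤ n, the vectors c_{1,1},...,c_{1,r}, c_{2,1},...,c_{2,m−2−r}, c_{j,s} are linearly independent over Z_b. -/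
/-- For every `j ∈ {1, 2}`, every integer `r` with `0 ≤ r ≤ m - 2`, and
every integer `s` with `m - 1 ≤ s ≤ n`, the vectors
`c_{1,1}, ..., c_{1,r}, c_{2,1}, ..., c_{2,m-2-r}, c_{j,s}` (where `c_{j,l}` is the `l`-th
row, 1-indexed, of the generating matrix `C_j` of the folded Hammersley point set) are
linearly independent over `ZMod b`. -/
theorem folded_hammersley_rows_indep_three (b m n : ℕ) (hb : 2 ≤ b) (hmn : 2 * m ≤ n)
    (j : ℕ) (hj : j = 1 ∨ j = 2) (r : ℕ) (hr : r + 2 ≤ m)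
    (s : ℕ) (hs1 : m ≤ s + 1) (hs2 : s ≤ n) :
    LinearIndependent (ZMod b)
      (Sum.elim
        (fun i : Fin r => fhC1 b m n ⟨(i : ℕ), by have := i.isLt; omega⟩)
        (Sum.elim
          (fun i : Fin (m - 2 - r) => fhC2 b m n ⟨(i : ℕ), by have := i.isLt; omega⟩)
          (fun _ : Unit =>
            (if j = 1 then fhC1 b m n else fhC2 b m n) ⟨s - 1, by omega⟩))) := by
  have hm2 : 2 ≤ m := by omega
  have hb1 : ((b - 1 : ℕ) : ZMod b) = -1 := by
    have h1 : ((b - 1 : ℕ) : ZMod b) = (b : ZMod b) - 1 := by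
      push_cast [Nat.cast_sub (by omega : 1 ≤ b)]; ring
    simp [h1, ZMod.natCast_self]
  have E1 : ∀ (i : ℕ) (hi : i < n) (k : ℕ) (hk : k < m),
      fhC1 b m n ⟨i, hi⟩ ⟨k, hk⟩ =
        if k = 0 then ((b - 1 : ℕ) : ZMod b)
        else if i + 2 ≤ m ∧ k = i + 1 then 1 else 0 := fun _ _ _ _ => rfl
  have E2 : ∀ (i : ℕ) (hi : i < n) (k : ℕ) (hk : k < m),
      fhC2 b m n ⟨i, hi⟩ ⟨k, hk⟩ =
        if k + 1 = m then ((b - 1 : ℕ) : ZMod b)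
        else if i + 2 ≤ m ∧ k + 2 + i = m then 1 else 0 := fun _ _ _ _ => rfl
  rw [Fintype.linearIndependent_iff]
  intro g hg
  have hcol : ∀ k : Fin m,
      (∑ i : Fin r, g (Sum.inl i) * fhC1 b m n ⟨(i : ℕ), by have := i.isLt; omega⟩ k)
      + ((∑ i : Fin (m - 2 - r), g (Sum.inr (Sum.inl i)) *
            fhC2 b m n ⟨(i : ℕ), by have := i.isLt; omega⟩ k)
        + g (Sum.inr (Sum.inr ())) *
            ((if j = 1 then fhC1 b m n else fhC2 b m n) ⟨s - 1, by omega⟩ k)) = 0 := by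
    intro k
    have h := congrFun hg k
    simpa [Fintype.sum_sum_type, Finset.sum_apply, Pi.smul_apply, smul_eq_mul] using h
  -- Step A: coefficients of the C₁ rows vanish
  have hA : ∀ i0 : Fin r, g (Sum.inl i0) = 0 := by
    intro i0
    have hi0 := i0.isLt
    have h := hcol ⟨(i0 : ℕ) + 1, by omega⟩
    have e1 : (∑ i : Fin r, g (Sum.inl i) *
        fhC1 b m n ⟨(i : ℕ), by have := i.isLt; omega⟩ ⟨(i0 : ℕ) + 1, by omega⟩)
        = g (Sum.inl i0) := by
      rw [Finset.sum_eq_single i0]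
      · rw [E1, if_neg (by omega), if_pos ⟨by omega, rfl⟩, mul_one]
      · intro i _ hne
        have hi := i.isLt
        rw [E1, if_neg (by omega), if_neg, mul_zero]
        rintro ⟨-, h2⟩
        exact hne (Fin.ext (by omega))
      · simp
    have e2 : (∑ i : Fin (m - 2 - r), g (Sum.inr (Sum.inl i)) *
        fhC2 b m n ⟨(i : ℕ), by have := i.isLt; omega⟩ ⟨(i0 : ℕ) + 1, by omega⟩) = 0 := by
      refine Finset.sum_eq_zero fun i _ => ?_
      have hi := i.isLt
      rw [E2, if_neg (by omega), if_neg (by omega), mul_zero]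
    have e3 : ((if j = 1 then fhC1 b m n else fhC2 b m n) ⟨s - 1, by omega⟩
        ⟨(i0 : ℕ) + 1, by omega⟩) = 0 := by
      rcases hj with hj | hj <;> subst hj
      · rw [if_pos rfl, E1, if_neg (by omega), if_neg (by omega)]
      · rw [if_neg (by omega), E2, if_neg (by omega), if_neg (by omega)]
    rw [e1, e2, e3] at h
    simpa using h
  -- Step B: coefficients of the C₂ rows vanish
  have hB : ∀ i0 : Fin (m - 2 - r), g (Sum.inr (Sum.inl i0)) = 0 := by
    intro i0
    have hi0 := i0.isLt
    have h := hcol ⟨m - 2 - (i0 : ℕ), by omega⟩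
    have e1 : (∑ i : Fin r, g (Sum.inl i) *
        fhC1 b m n ⟨(i : ℕ), by have := i.isLt; omega⟩ ⟨m - 2 - (i0 : ℕ), by omega⟩)
        = 0 := by
      refine Finset.sum_eq_zero fun i _ => ?_
      have hi := i.isLt
      rw [E1, if_neg (by omega), if_neg (by omega), mul_zero]
    have e2 : (∑ i : Fin (m - 2 - r), g (Sum.inr (Sum.inl i)) *
        fhC2 b m n ⟨(i : ℕ), by have := i.isLt; omega⟩ ⟨m - 2 - (i0 : ℕ), by omega⟩)
        = g (Sum.inr (Sum.inl i0)) := by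
      rw [Finset.sum_eq_single i0]
      · rw [E2, if_neg (by omega), if_pos ⟨by omega, by omega⟩, mul_one]
      · intro i _ hne
        have hi := i.isLt
        rw [E2, if_neg (by omega), if_neg, mul_zero]
        rintro ⟨-, h2⟩
        exact hne (Fin.ext (by omega))
      · simp
    have e3 : ((if j = 1 then fhC1 b m n else fhC2 b m n) ⟨s - 1, by omega⟩
        ⟨m - 2 - (i0 : ℕ), by omega⟩) = 0 := by
      rcases hj with hj | hj <;> subst hj
      · rw [if_pos rfl, E1, if_neg (by omega), if_neg (by omega)]
      · rw [if_neg (by omega), E2, if_neg (by omega), if_neg (by omega)]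
    rw [e1, e2, e3] at h
    simpa using h
  -- Step C: the last coefficient vanishes
  have hC : g (Sum.inr (Sum.inr ())) = 0 := by
    rcases hj with hj | hj
    · -- j = 1 : look at column 0
      subst hj
      have h := hcol ⟨0, by omega⟩
      have e1 : (∑ i : Fin r, g (Sum.inl i) *
          fhC1 b m n ⟨(i : ℕ), by have := i.isLt; omega⟩ ⟨0, by omega⟩) = 0 := by
        refine Finset.sum_eq_zero fun i _ => ?_
        rw [hA i, zero_mul]
      have e2 : (∑ i : Fin (m - 2 - r), g (Sum.inr (Sum.inl i)) *
          fhC2 b m n ⟨(i : ℕ), by have := i.isLt; omega⟩ ⟨0, by omega⟩) = 0 := by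
        refine Finset.sum_eq_zero fun i _ => ?_
        have hi := i.isLt
        rw [E2, if_neg (by omega), if_neg (by omega), mul_zero]
      have e3 : ((if (1 : ℕ) = 1 then fhC1 b m n else fhC2 b m n) ⟨s - 1, by omega⟩
          ⟨0, by omega⟩) = -1 := by
        rw [if_pos rfl, E1, if_pos rfl, hb1]
      rw [e1, e2, e3] at h
      simp only [zero_add, mul_neg_one, neg_eq_zero] at h
      exact h
    · -- j = 2 : look at column m - 1
      subst hj
      have h := hcol ⟨m - 1, by omega⟩
      have e1 : (∑ i : Fin r, g (Sum.inl i) *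
          fhC1 b m n ⟨(i : ℕ), by have := i.isLt; omega⟩ ⟨m - 1, by omega⟩) = 0 := by
        refine Finset.sum_eq_zero fun i _ => ?_
        rw [hA i, zero_mul]
      have e2 : (∑ i : Fin (m - 2 - r), g (Sum.inr (Sum.inl i)) *
          fhC2 b m n ⟨(i : ℕ), by have := i.isLt; omega⟩ ⟨m - 1, by omega⟩) = 0 := by
        refine Finset.sum_eq_zero fun i _ => ?_
        rw [hB i, zero_mul]
      have e3 : ((if (2 : ℕ) = 1 then fhC1 b m n else fhC2 b m n) ⟨s - 1, by omega⟩
          ⟨m - 1, by omega⟩) = -1 := by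
        rw [if_neg (by omega), E2, if_pos (by omega), hb1]
      rw [e1, e2, e3] at h
      simp only [zero_add, mul_neg_one, neg_eq_zero] at h
      exact h
  rintro (i | i | _)
  · exact hA i
  · exact hB i
  · exact hC
end

section
/- For all integers r_{1,1}, r_{1,2}, r_{2,1}, r_{2,2} with 0 < r_{1,2} < r_{1,1} ≤ m−2 and 0 < r_{2,2} < r_{2,1} ≤ m−2 and r_{1,1}+r_{1,2}+r_{2,1}+r_{2,2} ≤ 2m−3, the vectors c_{1,1},...,c_{1,r_{1,2}}, c_{1,r_{1,1}}, c_{2,1},...,c_{2,r_{2,2}}, c_{2,r_{2,1}} are linearly independent over Z_b. -/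
/-- For all integers `r₁₁, r₁₂, r₂₁, r₂₂` with `0 < r₁₂ < r₁₁ ≤ m - 2`,
`0 < r₂₂ < r₂₁ ≤ m - 2` and `r₁₁ + r₁₂ + r₂₁ + r₂₂ ≤ 2m - 3`, the vectors
`c_{1,1}, ..., c_{1,r₁₂}, c_{1,r₁₁}, c_{2,1}, ..., c_{2,r₂₂}, c_{2,r₂₁}` (where `c_{j,l}`
is the `l`-th row, 1-indexed, of the generating matrix `C_j` of the folded Hammersley
point set) are linearly independent over `ZMod b`. -/
theorem folded_hammersley_rows_indep_four (b m n : ℕ) (hb : 2 ≤ b) (hmn : 2 * m ≤ n)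
    (r11 r12 r21 r22 : ℕ)
    (h1a : 0 < r12) (h1b : r12 < r11) (h1c : r11 + 2 ≤ m)
    (h2a : 0 < r22) (h2b : r22 < r21) (h2c : r21 + 2 ≤ m)
    (hsum : r11 + r12 + r21 + r22 + 3 ≤ 2 * m) :
    LinearIndependent (ZMod b)
      (Sum.elim
        (Sum.elim
          (fun i : Fin r12 => fhC1 b m n ⟨(i : ℕ), by have := i.isLt; omega⟩)
          (fun _ : Unit => fhC1 b m n ⟨r11 - 1, by omega⟩))
        (Sum.elim
          (fun i : Fin r22 => fhC2 b m n ⟨(i : ℕ), by have := i.isLt; omega⟩)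
          (fun _ : Unit => fhC2 b m n ⟨r21 - 1, by omega⟩))) := by
  have hb1 : ((b - 1 : ℕ) : ZMod b) = -1 := by
    have h1 : (1:ℕ) ≤ b := by omega
    push_cast [h1]
    simp
  have L1 : r12 + r22 + 2 ≤ m := by omega
  rw [Fintype.linearIndependent_iff]
  intro g hg
  have hS : ∀ c : ℕ, c < m →
      ((∑ x : Fin r12, g (Sum.inl (Sum.inl x)) *
          if c = 0 then (-1 : ZMod b) else if (x:ℕ) + 2 ≤ m ∧ c = (x:ℕ) + 1 then 1 else 0) +
        g (Sum.inl (Sum.inr default)) *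
          if c = 0 then -1 else if r11 - 1 + 2 ≤ m ∧ c = r11 - 1 + 1 then 1 else 0) +
      ((∑ x : Fin r22, g (Sum.inr (Sum.inl x)) *
          if c + 1 = m then -1 else if (x:ℕ) + 2 ≤ m ∧ c + 2 + (x:ℕ) = m then 1 else 0) +
        g (Sum.inr (Sum.inr default)) *
          if c + 1 = m then -1 else if r21 - 1 + 2 ≤ m ∧ c + 2 + (r21 - 1) = m then 1 else 0) = 0 := by
    intro c hc
    have H := congrFun hg ⟨c, hc⟩
    simpa only [Finset.sum_apply, Pi.smul_apply, smul_eq_mul, Pi.zero_apply,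
      Fintype.sum_sum_type, Fintype.sum_unique, Sum.elim_inl, Sum.elim_inr,
      fhC1, fhC2, hb1] using H
  -- E1 : sum of c1 coefficients is zero
  have E1 : (∑ i : Fin r12, g (Sum.inl (Sum.inl i))) + g (Sum.inl (Sum.inr default)) = 0 := by
    have H := hS 0 (by omega)
    have k1 : ∀ i : Fin r22, ¬((i:ℕ) + 2 ≤ m ∧ 0 + 2 + (i:ℕ) = m) := fun i => by
      have := i.2; omega
    simp only [k1, if_false, eq_self_iff_true, if_true, mul_neg_one, mul_zero, mul_one,
      if_neg (show ¬((0:ℕ) + 1 = m) by omega),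
      if_neg (show ¬(r21 - 1 + 2 ≤ m ∧ 0 + 2 + (r21 - 1) = m) by omega),
      Finset.sum_neg_distrib, Finset.sum_const_zero, add_zero] at H
    linear_combination -H
  -- E2 : sum of c2 coefficients is zero
  have E2 : (∑ i : Fin r22, g (Sum.inr (Sum.inl i))) + g (Sum.inr (Sum.inr default)) = 0 := by
    have H := hS (m - 1) (by omega)
    have k1 : ∀ i : Fin r12, ¬((i:ℕ) + 2 ≤ m ∧ m - 1 = (i:ℕ) + 1) := fun i => by
      have := i.2; omega
    simp only [k1, if_false, mul_neg_one, mul_zero, mul_one,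
      if_neg (show ¬(m - 1 = 0) by omega),
      if_neg (show ¬(r11 - 1 + 2 ≤ m ∧ m - 1 = r11 - 1 + 1) by omega),
      if_pos (show m - 1 + 1 = m by omega),
      Finset.sum_neg_distrib, Finset.sum_const_zero, add_zero, zero_add] at H
    linear_combination -H
  -- E3 : equation at column i0 + 1
  have E3 : ∀ i0 : Fin r12, g (Sum.inl (Sum.inl i0)) +
      (if (i0:ℕ) + 2 + r21 = m then g (Sum.inr (Sum.inr default)) else 0) = 0 := by
    intro i0
    have hi0 := i0.2
    have H := hS ((i0:ℕ) + 1) (by omega)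
    have k1 : ∀ i : Fin r12, ((i:ℕ) + 2 ≤ m ∧ (i0:ℕ) + 1 = (i:ℕ) + 1) ↔ i = i0 := fun i => by
      constructor
      · rintro ⟨h1, h2⟩; exact Fin.ext (by omega)
      · rintro rfl; omega
    have k2 : ∀ i : Fin r22, ¬((i:ℕ) + 2 ≤ m ∧ (i0:ℕ) + 1 + 2 + (i:ℕ) = m) := fun i => by
      have := i.2; omega
    have k3 : (r21 - 1 + 2 ≤ m ∧ (i0:ℕ) + 1 + 2 + (r21 - 1) = m) ↔ (i0:ℕ) + 2 + r21 = m := by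
      omega
    simp only [k1, k2, k3, if_false, mul_zero, mul_one, mul_ite,
      if_neg (show ¬((i0:ℕ) + 1 = 0) by omega),
      if_neg (show ¬(r11 - 1 + 2 ≤ m ∧ (i0:ℕ) + 1 = r11 - 1 + 1) by omega),
      if_neg (show ¬((i0:ℕ) + 1 + 1 = m) by omega),
      Finset.sum_ite_eq', Finset.mem_univ, if_true,
      Finset.sum_const_zero, add_zero, zero_add] at H
    linear_combination H
  -- E4 : equation at column m - 2 - i0
  have E4 : ∀ i0 : Fin r22,
      (if (i0:ℕ) + 2 + r11 = m then g (Sum.inl (Sum.inr default)) else 0) +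
      g (Sum.inr (Sum.inl i0)) = 0 := by
    intro i0
    have hi0 := i0.2
    have H := hS (m - 2 - (i0:ℕ)) (by omega)
    have k1 : ∀ i : Fin r12, ¬((i:ℕ) + 2 ≤ m ∧ m - 2 - (i0:ℕ) = (i:ℕ) + 1) := fun i => by
      have := i.2; omega
    have k2 : (r11 - 1 + 2 ≤ m ∧ m - 2 - (i0:ℕ) = r11 - 1 + 1) ↔ (i0:ℕ) + 2 + r11 = m := by
      omega
    have k3 : ∀ i : Fin r22, ((i:ℕ) + 2 ≤ m ∧ m - 2 - (i0:ℕ) + 2 + (i:ℕ) = m) ↔ i = i0 := fun i => by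
      constructor
      · rintro ⟨h1, h2⟩; exact Fin.ext (by omega)
      · rintro rfl; omega
    simp only [k1, k2, k3, if_false, mul_zero, mul_one, mul_ite,
      if_neg (show ¬(m - 2 - (i0:ℕ) = 0) by omega),
      if_neg (show ¬(m - 2 - (i0:ℕ) + 1 = m) by omega),
      if_neg (show ¬(r21 - 1 + 2 ≤ m ∧ m - 2 - (i0:ℕ) + 2 + (r21 - 1) = m) by omega),
      Finset.sum_ite_eq', Finset.mem_univ, if_true,
      Finset.sum_const_zero, add_zero, zero_add] at H
    linear_combination H
  -- endgame
  by_cases hP3 : m ≤ r12 + r21 + 1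
  · have ha : ∀ i : Fin r22, g (Sum.inr (Sum.inl i)) = 0 := fun i => by
      have := E4 i
      rw [if_neg (by have := i.2; omega)] at this
      simpa using this
    have hD : g (Sum.inr (Sum.inr default)) = 0 := by
      have := E2
      rw [Finset.sum_eq_zero (fun i _ => ha i)] at this
      simpa using this
    have hb' : ∀ i : Fin r12, g (Sum.inl (Sum.inl i)) = 0 := fun i => by
      have := E3 i
      rw [hD] at this
      simpa using this
    have hA : g (Sum.inl (Sum.inr default)) = 0 := by
      have := E1
      rw [Finset.sum_eq_zero (fun i _ => hb' i)] at this
      simpa using this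
    rintro ((i | u) | (i | u))
    · exact hb' i
    · cases u; exact hA
    · exact ha i
    · cases u; exact hD
  · have hb' : ∀ i : Fin r12, g (Sum.inl (Sum.inl i)) = 0 := fun i => by
      have := E3 i
      rw [if_neg (by have := i.2; omega)] at this
      simpa using this
    have hA : g (Sum.inl (Sum.inr default)) = 0 := by
      have := E1
      rw [Finset.sum_eq_zero (fun i _ => hb' i)] at this
      simpa using this
    have ha : ∀ i : Fin r22, g (Sum.inr (Sum.inl i)) = 0 := fun i => by
      have := E4 i
      rw [hA] at this
      simpa using this
    have hD : g (Sum.inr (Sum.inr default)) = 0 := by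
      have := E2
      rw [Finset.sum_eq_zero (fun i _ => ha i)] at this
      simpa using this
    rintro ((i | u) | (i | u))
    · exact hb' i
    · cases u; exact hA
    · exact ha i
    · cases u; exact hD
end

section
/- Every pair (k₁, k₂) ∈ P⊥ with (k₁, k₂) ≠ (0, 0), where P⊥ is the dual net of the generating matrices C₁, C₂ of the folded Hammersley point set, satisfies μ₁(k₁) + μ₁(k₂) > m − 1; that is, the minimum NRT weight of the folded Hammersley point set P_{m,τ_n} in base b satisfies ρ₁(P_{m,τ_n}) > m − 1. -/
/-- The vector of the first `n` base-`b` digits of `k ∈ ℕ` (least significant first),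
viewed in `ZMod b`. -/
def digitVec (b n k : ℕ) : Fin n → ZMod b := fun i => (((k / b ^ (i : ℕ)) % b : ℕ) : ZMod b)

/-- The NRT weight `μ₁(k)`: the largest index `i ≥ 1` such that the `i`-th base-`b`
digit of `k` is nonzero, and `μ₁(0) = 0`. -/
def mu1 (b k : ℕ) : ℕ := if k = 0 then 0 else Nat.log b k + 1


lemma fh_sum_single {b n : ℕ} (E f : Fin n → ZMod b) (i0 : Fin n)
    (h0 : E i0 = 1) (h1 : ∀ i : Fin n, i ≠ i0 → E i = 0) :
    ∑ i : Fin n, E i * f i = f i0 := by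
  rw [Finset.sum_eq_single i0 (fun i _ hi => by rw [h1 i hi, zero_mul])
    (fun h => absurd (Finset.mem_univ i0) h), h0, one_mul]

lemma fh_digit_zero (b k i : ℕ) (hb : 2 ≤ b) (h : mu1 b k ≤ i) :
    k / b ^ i % b = 0 := by
  rcases eq_or_ne k 0 with rfl | hk
  · simp
  · have hlog : Nat.log b k + 1 ≤ i := by simpa [mu1, hk] using h
    have hki : k < b ^ i :=
      lt_of_lt_of_le (Nat.lt_pow_succ_log_self hb k) (Nat.pow_le_pow_right (by omega) hlog)
    simp [Nat.div_eq_of_lt hki]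

lemma fh_top_digit (b k : ℕ) (hb : 2 ≤ b) (hk : k ≠ 0) :
    ((k / b ^ (mu1 b k - 1) % b : ℕ) : ZMod b) ≠ 0 := by
  have h1 : mu1 b k - 1 = Nat.log b k := by simp [mu1, hk]
  rw [h1]
  have hle : b ^ Nat.log b k ≤ k := Nat.pow_log_le_self b hk
  have hlt : k < b ^ (Nat.log b k + 1) := Nat.lt_pow_succ_log_self hb k
  have hpos : 0 < b ^ Nat.log b k := pow_pos (by omega) _
  have hd1 : 1 ≤ k / b ^ Nat.log b k := (Nat.one_le_div_iff hpos).2 hle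
  have hd2 : k / b ^ Nat.log b k < b := by
    rw [Nat.div_lt_iff_lt_mul hpos]
    calc k < b ^ (Nat.log b k + 1) := hlt
    _ = b * b ^ Nat.log b k := by ring
  rw [Nat.mod_eq_of_lt hd2]
  haveI : NeZero b := ⟨by omega⟩
  intro h0
  have hdvd := (ZMod.natCast_eq_zero_iff _ _).1 h0
  have := Nat.le_of_dvd (by omega) hdvd
  omega

lemma fh_cast_b_sub_one (b : ℕ) (hb : 2 ≤ b) : ((b - 1 : ℕ) : ZMod b) = -1 := by
  have h : ((b - 1 : ℕ) : ZMod b) = (b : ZMod b) - 1 := by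
    push_cast [Nat.cast_sub (by omega : 1 ≤ b)]; ring
  rw [h, ZMod.natCast_self]; ring

lemma fh_mu1_pos (b k : ℕ) (hk : k ≠ 0) : 1 ≤ mu1 b k := by simp [mu1, hk]

/-- Every `(k₁, k₂) ≠ (0, 0)` in the dual net of the generating
matrices `C₁, C₂` of the folded Hammersley point set satisfies
`μ₁(k₁) + μ₁(k₂) > m - 1`; that is, the minimum NRT weight of the folded Hammersley
point set `P_{m,τ_n}` in base `b` satisfies `ρ₁(P_{m,τ_n}) > m - 1`. -/
theorem folded_hammersley_min_nrt_weight (b m n : ℕ) (hb : 2 ≤ b) (hm : 1 ≤ m)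
    (hmn : 2 * m ≤ n) (k1 k2 : ℕ) (hk1 : k1 < b ^ n) (hk2 : k2 < b ^ n)
    (hdual : Matrix.mulVec (fhC1 b m n).transpose (digitVec b n k1) +
        Matrix.mulVec (fhC2 b m n).transpose (digitVec b n k2) = 0)
    (hne : ¬(k1 = 0 ∧ k2 = 0)) :
    m - 1 < mu1 b k1 + mu1 b k2 := by
  rcases Nat.lt_or_ge m 2 with hm1 | hm2
  · -- m = 1
    have hm1' : m = 1 := by omega
    rcases not_and_or.1 hne with h | h
    · have := fh_mu1_pos b k1 h; omega
    · have := fh_mu1_pos b k2 h; omega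
  -- m ≥ 2 henceforth
  by_contra hcon
  push_neg at hcon
  set X : ℕ → ZMod b := fun i => ((k1 / b ^ i % b : ℕ) : ZMod b) with hXdef
  set Y : ℕ → ZMod b := fun i => ((k2 / b ^ i % b : ℕ) : ZMod b) with hYdef
  set a := mu1 b k1 with hadef
  set c := mu1 b k2 with hcdef
  have hXzero : ∀ i : ℕ, a ≤ i → X i = 0 := by
    intro i hi
    simp only [hXdef, fh_digit_zero b k1 i hb hi, Nat.cast_zero]
  have hYzero : ∀ i : ℕ, c ≤ i → Y i = 0 := by
    intro i hi
    simp only [hYdef, fh_digit_zero b k2 i hb hi, Nat.cast_zero]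
  have heq : ∀ j : Fin m,
      (∑ i : Fin n, fhC1 b m n i j * X i) + (∑ i : Fin n, fhC2 b m n i j * Y i) = 0 := by
    intro j
    have h := congrFun hdual j
    simpa [Matrix.mulVec, Matrix.transpose_apply, dotProduct, digitVec,
      Pi.add_apply, hXdef, hYdef] using h
  -- Equation for column j = 0 :  ∑ X = Y (m-2)
  have hE0 : ∑ i : Fin n, X (i : ℕ) = Y (m - 2) := by
    have h := heq ⟨0, by omega⟩
    have hs1 : ∑ i : Fin n, fhC1 b m n i ⟨0, by omega⟩ * X (i : ℕ)
        = -1 * ∑ i : Fin n, X (i : ℕ) := by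
      rw [Finset.mul_sum]
      refine Finset.sum_congr rfl fun i _ => ?_
      simp [fhC1, fh_cast_b_sub_one b hb]
    have hs2 : ∑ i : Fin n, fhC2 b m n i ⟨0, by omega⟩ * Y (i : ℕ) = Y (m - 2) := by
      refine fh_sum_single _ _ ⟨m - 2, by omega⟩ ?_ ?_
      · simp only [fhC2]
        rw [if_neg (by simp; omega), if_pos (by simp; omega)]
      · intro i hi
        simp only [fhC2]
        rw [if_neg (by simp; omega), if_neg ?_]
        intro hcond
        exact hi (Fin.ext (show (i : ℕ) = m - 2 by omega))
    rw [hs1, hs2] at h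
    linear_combination -h
  -- Middle equations :  X i + Y (m-3-i) = 0 for i + 3 ≤ m
  have hmid : ∀ i : ℕ, i + 3 ≤ m → X i + Y (m - 3 - i) = 0 := by
    intro i hi
    have h := heq ⟨i + 1, by omega⟩
    have hs1 : ∑ r : Fin n, fhC1 b m n r ⟨i + 1, by omega⟩ * X (r : ℕ) = X i := by
      refine fh_sum_single _ _ ⟨i, by omega⟩ ?_ ?_
      · simp only [fhC1]
        rw [if_neg (by simp), if_pos (by simp; omega)]
      · intro r hr
        simp only [fhC1]
        rw [if_neg (by simp), if_neg ?_]
        intro hcond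
        exact hr (Fin.ext (show (r : ℕ) = i by omega))
    have hs2 : ∑ r : Fin n, fhC2 b m n r ⟨i + 1, by omega⟩ * Y (r : ℕ) = Y (m - 3 - i) := by
      refine fh_sum_single _ _ ⟨m - 3 - i, by omega⟩ ?_ ?_
      · simp only [fhC2]
        rw [if_neg (by omega), if_pos (by constructor <;> omega)]
      · intro r hr
        simp only [fhC2]
        rw [if_neg (by omega), if_neg ?_]
        intro hcond
        exact hr (Fin.ext (show (r : ℕ) = m - 3 - i by omega))
    rw [hs1, hs2] at h
    exact h
  -- Case analysis
  rcases eq_or_ne k1 0 with hk10 | hk10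
  · -- k1 = 0, so k2 ≠ 0
    have hk20 : k2 ≠ 0 := fun h => hne ⟨hk10, h⟩
    have hXall : ∀ i : ℕ, X i = 0 := by
      intro i; simp [hXdef, hk10]
    have hc1 : 1 ≤ c := fh_mu1_pos b k2 hk20
    have hYtop : Y (c - 1) ≠ 0 := fh_top_digit b k2 hb hk20
    have ha0 : a = 0 := by simp [hadef, mu1, hk10]
    rcases Nat.lt_or_ge c (m - 1) with hcm | hcm
    · -- c ≤ m - 2 : use middle equation at i = m - 2 - c
      have h := hmid (m - 2 - c) (by omega)
      rw [hXall _, show m - 3 - (m - 2 - c) = c - 1 by omega, zero_add] at h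
      exact hYtop h
    · -- c = m - 1
      have hcm' : c = m - 1 := by omega
      have hsum0 : ∑ i : Fin n, X (i : ℕ) = 0 :=
        Finset.sum_eq_zero fun i _ => hXall _
      rw [hsum0] at hE0
      exact hYtop (by rw [show c - 1 = m - 2 by omega]; exact hE0.symm)
  · -- k1 ≠ 0
    have ha1 : 1 ≤ a := fh_mu1_pos b k1 hk10
    have hXtop : X (a - 1) ≠ 0 := fh_top_digit b k1 hb hk10
    rcases Nat.lt_or_ge (a + c) (m - 1) with hac | hac
    · -- a + c ≤ m - 2 : middle equation at i = a - 1
      have h := hmid (a - 1) (by omega)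
      rw [hYzero (m - 3 - (a - 1)) (by omega), add_zero] at h
      exact hXtop h
    · -- a + c = m - 1
      have hac' : a + c = m - 1 := by omega
      have hsum : ∑ i : Fin n, X (i : ℕ) = X (a - 1) := by
        refine Finset.sum_eq_single (⟨a - 1, by omega⟩ : Fin n) ?_
          (fun h => absurd (Finset.mem_univ _) h)
        intro r _ hr
        have hrv : (r : ℕ) ≠ a - 1 := fun h => hr (Fin.ext h)
        rcases Nat.lt_or_ge (r : ℕ) a with hlt | hge
        · have h := hmid (r : ℕ) (by omega)
          rw [hYzero (m - 3 - (r : ℕ)) (by omega), add_zero] at h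
          exact h
        · exact hXzero _ hge
      rw [hsum] at hE0
      rw [hYzero (m - 2) (by omega)] at hE0
      exact hXtop hE0
end

section
/- Every pair (k₁, k₂) ∈ P⊥ with (k₁, k₂) ≠ (0, 0), where P⊥ is the dual net of the generating matrices C₁, C₂ of the folded Hammersley point set, satisfies μ₂(k₁) + μ₂(k₂) > 2m − 3; that is, the minimum Dick weight of the folded Hammersley point set P_{m,τ_n} in base b satisfies ρ₂(P_{m,τ_n}) > 2m − 3. -/
/-- The Dick weight `μ₂(k)`: the sum of the two largest indices `i ≥ 1` such that the
`i`-th base-`b` digit of `k` is nonzero if `k` has at least two nonzero digits, the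
largest such index if `k` has exactly one nonzero digit, and `μ₂(0) = 0`. -/
def mu2 (b k : ℕ) : ℕ :=
  if k = 0 then 0
  else
    let a1 := Nat.log b k + 1
    let r := k % b ^ (a1 - 1)
    if r = 0 then a1 else a1 + (Nat.log b r + 1)

open Finset Matrix

-- `digit b k i` is the paper's `κ_{i+1}`.
def digit (b k i : ℕ) : ℕ := k / b ^ i % b

section Digits

variable {b k : ℕ}

lemma natCast_digit_eq_zero_iff (hb : 0 < b) {i : ℕ} :
    (digit b k i : ZMod b) = 0 ↔ digit b k i = 0 := by
  rw [ZMod.natCast_eq_zero_iff]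
  exact ⟨fun h => Nat.eq_zero_of_dvd_of_lt h (Nat.mod_lt _ hb), fun h => h ▸ dvd_zero b⟩

lemma digit_eq_zero_of_lt_pow {i : ℕ} (hk : k < b ^ i) : digit b k i = 0 := by
  simp [digit, Nat.div_eq_of_lt hk]

lemma digit_log_ne_zero (hb : 1 < b) (hk : k ≠ 0) : digit b k (Nat.log b k) ≠ 0 := by
  have hpos : 0 < b ^ Nat.log b k := by positivity
  have hlow : 1 ≤ k / b ^ Nat.log b k :=
    (Nat.one_le_div_iff hpos).mpr (Nat.pow_log_le_self b hk)
  have hhigh : k / b ^ Nat.log b k < b := by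
    rw [Nat.div_lt_iff_lt_mul hpos, ← pow_succ']
    exact Nat.lt_pow_succ_log_self hb k
  rw [digit, Nat.mod_eq_of_lt hhigh]
  omega

lemma le_log_of_digit_ne_zero (hb : 1 < b) {i : ℕ} (h : digit b k i ≠ 0) :
    i ≤ Nat.log b k := by
  by_contra! hi
  exact h (digit_eq_zero_of_lt_pow ((Nat.lt_pow_succ_log_self hb k).trans_le
    (Nat.pow_le_pow_right hb.le hi)))

lemma digit_mod_pow {p L : ℕ} (hpL : p < L) : digit b (k % b ^ L) p = digit b k p := by
  rw [digit, digit, ← Nat.add_sub_cancel' hpL.le, pow_add, Nat.mod_mul_right_div_self,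
    Nat.mod_mod_of_dvd _ (dvd_pow_self b (by omega))]

lemma exists_two_digits_ne_zero {n : ℕ} (hb : 1 < b) (hk : k ≠ 0) (hkn : k < b ^ n)
    (hsum : ∑ i ∈ range n, (digit b k i : ZMod b) = 0) :
    ∃ p q, p < q ∧ digit b k p ≠ 0 ∧ digit b k q ≠ 0 := by
  by_contra! hone
  have htop := digit_log_ne_zero hb hk
  have hsingle : ∀ i ≠ Nat.log b k, digit b k i = 0 := by
    intro i hi
    by_contra h
    rcases hi.lt_or_gt with hlt | hgt
    · exact htop (hone _ _ hlt h)
    · exact h (hone _ _ hgt htop)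
  rw [sum_eq_single_of_mem _ (mem_range.mpr (Nat.log_lt_of_lt_pow hk hkn))
    (fun i _ hi => by rw [hsingle i hi, Nat.cast_zero])] at hsum
  exact htop ((natCast_digit_eq_zero_iff (by omega)).mp hsum)

end Digits

section DickWeight

variable {b k : ℕ}

lemma log_add_one_le_mu2 (hk : k ≠ 0) : Nat.log b k + 1 ≤ mu2 b k := by
  rw [mu2, if_neg hk]
  dsimp only
  split_ifs <;> omega

lemma mu2_eq_zero_iff : mu2 b k = 0 ↔ k = 0 :=
  ⟨fun h => by_contra fun hk => by have := log_add_one_le_mu2 (b := b) hk; omega,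
    fun h => by simp [mu2, h]⟩

lemma add_one_le_mu2_of_pow_le (hb : 1 < b) {s : ℕ} (hs : b ^ s ≤ k) : s + 1 ≤ mu2 b k := by
  have := log_add_one_le_mu2 (b := b) ((pow_pos (by omega) s).trans_le hs).ne'
  have := Nat.le_log_of_pow_le hb hs
  omega

lemma add_one_le_mu2 (hb : 1 < b) {p : ℕ} (hp : digit b k p ≠ 0) : p + 1 ≤ mu2 b k := by
  have hk : k ≠ 0 := by rintro rfl; simp [digit] at hp
  have := log_add_one_le_mu2 (b := b) hk
  have := le_log_of_digit_ne_zero hb hp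
  omega

lemma add_add_two_le_mu2 (hb : 1 < b) {p q : ℕ} (hpq : p < q) (hp : digit b k p ≠ 0)
    (hq : digit b k q ≠ 0) : p + q + 2 ≤ mu2 b k := by
  have hk : k ≠ 0 := by rintro rfl; simp [digit] at hq
  have hqL := le_log_of_digit_ne_zero hb hq
  have hp' : digit b (k % b ^ Nat.log b k) p ≠ 0 := by
    rwa [digit_mod_pow (by omega)]
  have hr : k % b ^ Nat.log b k ≠ 0 := by rintro h; simp [h, digit] at hp'
  have := le_log_of_digit_ne_zero hb hp'
  simp only [mu2, if_neg hk, Nat.add_sub_cancel, if_neg hr]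
  omega

end DickWeight

section FoldedHammersley

variable {b m n : ℕ}

lemma fhC2_apply (i : Fin n) (j : Fin m) : fhC2 b m n i j = fhC1 b m n i j.rev := by
  have hj := j.isLt
  have hlast : m - (j + 1) = 0 ↔ (j : ℕ) + 1 = m := by omega
  have hmid : (i : ℕ) + 2 ≤ m ∧ m - (j + 1) = i + 1 ↔ (i : ℕ) + 2 ≤ m ∧ (j : ℕ) + 2 + i = m := by
    omega
  simp only [fhC1, fhC2, Fin.val_rev, hlast, hmid]

lemma fhC2_transpose_mulVec_apply (x : Fin n → ZMod b) (j : Fin m) :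
    ((fhC2 b m n)ᵀ *ᵥ x) j = ((fhC1 b m n)ᵀ *ᵥ x) j.rev := by
  simp only [mulVec, dotProduct, transpose_apply, fhC2_apply]

lemma fhC1_transpose_mulVec_apply_of_val_eq_zero (hb : 0 < b) (x : Fin n → ZMod b) (j : Fin m)
    (hj : (j : ℕ) = 0) : ((fhC1 b m n)ᵀ *ᵥ x) j = -∑ i, x i := by
  simp [mulVec, dotProduct, fhC1, hj, Nat.cast_pred hb]

lemma fhC1_transpose_mulVec_apply_of_val_eq_succ {t : ℕ} (ht : t + 2 ≤ m) (htn : t < n)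
    (x : Fin n → ZMod b) (j : Fin m) (hj : (j : ℕ) = t + 1) :
    ((fhC1 b m n)ᵀ *ᵥ x) j = x ⟨t, htn⟩ := by
  have hcol : (fhC1 b m n)ᵀ j = Pi.single ⟨t, htn⟩ 1 := by
    ext i
    have hrow : (i : ℕ) + 2 ≤ m ∧ t + 1 = i + 1 ↔ (i : ℕ) = t := by omega
    simp only [transpose_apply, fhC1, hj, Nat.add_one_ne_zero, if_false, hrow, Pi.single_apply,
      Fin.ext_iff]
  rw [mulVec, hcol, single_dotProduct, one_mul]

lemma fh_dual_swap {x y : Fin n → ZMod b}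
    (h : (fhC1 b m n)ᵀ *ᵥ x + (fhC2 b m n)ᵀ *ᵥ y = 0) :
    (fhC1 b m n)ᵀ *ᵥ y + (fhC2 b m n)ᵀ *ᵥ x = 0 := by
  funext j
  have := congrFun h j.rev
  simp only [Pi.add_apply, Pi.zero_apply, fhC2_transpose_mulVec_apply, Fin.rev_rev] at this ⊢
  rwa [add_comm]

variable {k1 k2 : ℕ}

lemma sum_digit_eq_digit_of_dual (hb : 0 < b) (hm : 2 ≤ m) (hmn : m ≤ n + 1)
    (h : (fhC1 b m n)ᵀ *ᵥ digitVec b n k1 + (fhC2 b m n)ᵀ *ᵥ digitVec b n k2 = 0) :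
    ∑ i ∈ range n, (digit b k1 i : ZMod b) = digit b k2 (m - 2) := by
  have h0 := congrFun h ⟨0, by omega⟩
  rw [Pi.add_apply, fhC2_transpose_mulVec_apply,
    fhC1_transpose_mulVec_apply_of_val_eq_zero hb _ _ rfl,
    fhC1_transpose_mulVec_apply_of_val_eq_succ (t := m - 2) (by omega) (by omega) _ _
      (by simp only [Fin.val_rev]; omega)] at h0
  rw [← Fin.sum_univ_eq_sum_range]
  exact neg_add_eq_zero.mp h0

lemma digit_eq_zero_iff_of_dual (hb : 0 < b) (hmn : m ≤ n + 1) {t : ℕ} (ht : t + 3 ≤ m)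
    (h : (fhC1 b m n)ᵀ *ᵥ digitVec b n k1 + (fhC2 b m n)ᵀ *ᵥ digitVec b n k2 = 0) :
    digit b k1 t = 0 ↔ digit b k2 (m - 3 - t) = 0 := by
  have ht1 := congrFun h ⟨t + 1, by omega⟩
  rw [Pi.add_apply, fhC2_transpose_mulVec_apply,
    fhC1_transpose_mulVec_apply_of_val_eq_succ (t := t) (by omega) (by omega) _ _ rfl,
    fhC1_transpose_mulVec_apply_of_val_eq_succ (t := m - 3 - t) (by omega) (by omega) _ _
      (by simp only [Fin.val_rev]; omega)] at ht1
  change (digit b k1 t : ZMod b) + digit b k2 (m - 3 - t) = 0 at ht1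
  rw [← natCast_digit_eq_zero_iff hb, ← natCast_digit_eq_zero_iff hb,
    eq_neg_of_add_eq_zero_left ht1, neg_eq_zero]

end FoldedHammersley

section MinDickWeight

variable {b m n k1 k2 : ℕ}

lemma two_mul_sub_three_lt_mu2_add_mu2_of_mirror (hb : 1 < b) {p q : ℕ} (hpq : p < q)
    (hp : digit b k1 p ≠ 0) (hq : digit b k1 q ≠ 0)
    (hmirror : ∀ t, t + 3 ≤ m → digit b k1 t ≠ 0 → digit b k2 (m - 3 - t) ≠ 0) :
    2 * m - 3 < mu2 b k1 + mu2 b k2 := by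
  have h1 := add_add_two_le_mu2 hb hpq hp hq
  by_cases hq3 : q + 3 ≤ m
  · have h2 := add_add_two_le_mu2 hb (show m - 3 - q < m - 3 - p by omega)
      (hmirror q hq3 hq) (hmirror p (by omega) hp)
    omega
  by_cases hp3 : p + 3 ≤ m
  · have h2 := add_one_le_mu2 hb (hmirror p hp3 hp)
    omega
  omega

lemma two_mul_sub_three_lt_mu2_add_mu2_of_dual_of_lt_pow (hb : 1 < b) (hm : 2 ≤ m)
    (hmn : m ≤ n + 1) (hk1 : k1 < b ^ n) (hk2 : k2 < b ^ (m - 2))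
    (hdual : (fhC1 b m n)ᵀ *ᵥ digitVec b n k1 + (fhC2 b m n)ᵀ *ᵥ digitVec b n k2 = 0)
    (hne : ¬(k1 = 0 ∧ k2 = 0)) :
    2 * m - 3 < mu2 b k1 + mu2 b k2 := by
  have hmirror (t : ℕ) (ht : t + 3 ≤ m) : digit b k1 t = 0 ↔ digit b k2 (m - 3 - t) = 0 :=
    digit_eq_zero_iff_of_dual (by omega) hmn ht hdual
  have hk1_ne : k1 ≠ 0 := by
    rintro rfl
    have hk2_ne : k2 ≠ 0 := fun h => hne ⟨rfl, h⟩
    have hlog : Nat.log b k2 < m - 2 := Nat.log_lt_of_lt_pow hk2_ne hk2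
    have h := hmirror (m - 3 - Nat.log b k2) (by omega)
    rw [show m - 3 - (m - 3 - Nat.log b k2) = Nat.log b k2 by omega] at h
    exact digit_log_ne_zero hb hk2_ne (h.mp (by simp [digit]))
  have hsum : ∑ i ∈ range n, (digit b k1 i : ZMod b) = 0 := by
    rw [sum_digit_eq_digit_of_dual (by omega) hm hmn hdual, digit_eq_zero_of_lt_pow hk2,
      Nat.cast_zero]
  obtain ⟨p, q, hpq, hp, hq⟩ := exists_two_digits_ne_zero hb hk1_ne hk1 hsum
  exact two_mul_sub_three_lt_mu2_add_mu2_of_mirror hb hpq hp hq fun t ht => (hmirror t ht).not.mp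

end MinDickWeight

theorem folded_hammersley_min_dick_weight_general (b m n : ℕ) (hb : 2 ≤ b)
    (hmn : 2 * m ≤ n) (k1 k2 : ℕ) (hk1 : k1 < b ^ n) (hk2 : k2 < b ^ n)
    (hdual : Matrix.mulVec (fhC1 b m n).transpose (digitVec b n k1) +
        Matrix.mulVec (fhC2 b m n).transpose (digitVec b n k2) = 0)
    (hne : ¬(k1 = 0 ∧ k2 = 0)) :
    2 * m - 3 < mu2 b k1 + mu2 b k2 := by
  rcases Nat.lt_or_ge m 2 with hm | hm
  · have h1 := (mu2_eq_zero_iff (b := b) (k := k1)).not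
    have h2 := (mu2_eq_zero_iff (b := b) (k := k2)).not
    omega
  by_cases hk2_lt : k2 < b ^ (m - 2)
  · exact two_mul_sub_three_lt_mu2_add_mu2_of_dual_of_lt_pow hb hm (by omega) hk1 hk2_lt hdual hne
  by_cases hk1_lt : k1 < b ^ (m - 2)
  · rw [add_comm]
    exact two_mul_sub_three_lt_mu2_add_mu2_of_dual_of_lt_pow hb hm (by omega) hk2 hk1_lt
      (fh_dual_swap hdual) (by tauto)
  have h1 := add_one_le_mu2_of_pow_le hb (not_lt.mp hk1_lt)
  have h2 := add_one_le_mu2_of_pow_le hb (not_lt.mp hk2_lt)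
  omega

/-- Every `(k₁, k₂) ≠ (0, 0)` in the dual net of the generating
matrices `C₁, C₂` of the folded Hammersley point set satisfies
`μ₂(k₁) + μ₂(k₂) > 2m - 3`; that is, the minimum Dick weight of the folded Hammersley
point set `P_{m,τ_n}` in base `b` satisfies `ρ₂(P_{m,τ_n}) > 2m - 3`. -/
theorem folded_hammersley_min_dick_weight (b m n : ℕ) (hb : 2 ≤ b) (hm : 1 ≤ m)
    (hmn : 2 * m ≤ n) (k1 k2 : ℕ) (hk1 : k1 < b ^ n) (hk2 : k2 < b ^ n)
    (hdual : Matrix.mulVec (fhC1 b m n).transpose (digitVec b n k1) +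
        Matrix.mulVec (fhC2 b m n).transpose (digitVec b n k2) = 0)
    (hne : ¬(k1 = 0 ∧ k2 = 0)) :
    2 * m - 3 < mu2 b k1 + mu2 b k2 :=
  folded_hammersley_min_dick_weight_general b m n hb hmn k1 k2 hk1 hk2 hdual hne
end

section
/- Let b ≥ 2 be an integer, let m, n ∈ ℕ with m ≤ n, and let C₁, C₂ be n×m matrices over Z_b = ℤ/bℤ. Let ρ be a positive integer with ρ ≤ n such that for every choice of d₁, d₂ ∈ ℕ₀ with d₁ + d₂ = ρ, the first d₁ rows of C₁ together with the first d₂ rows of C₂ are linearly independent over Z_b. Then every (k₁, k₂) ∈ P⊥ with (k₁, k₂) ≠ (0, 0) satisfies μ₁(k₁) + μ₁(k₂) > ρ. -/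
/-!
If `μ₁(k₁) + μ₁(k₂) ≤ ρ`, take `d₁ = μ₁(k₁)` and `d₂ = ρ - d₁ ≥ μ₁(k₂)`. The digit vectors of
`k₁` and `k₂` vanish beyond positions `d₁` and `d₂`, so the dual-net relation
`C₁ᵀ k⃗₁ + C₂ᵀ k⃗₂ = 0` is a linear relation among the first `d₁` rows of `C₁` and the first `d₂`
rows of `C₂` whose coefficients are the digits. Independence of these `ρ` rows forces every digit
to vanish, while the leading digit of a nonzero `k` does not.
-/

open Finset

theorem Fin.sum_castLE_of_eq_zero {M : Type*} [AddCommMonoid M] {d n : ℕ} (h : d ≤ n)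
    {f : Fin n → M} (hf : ∀ i : Fin n, d ≤ i → f i = 0) :
    ∑ i : Fin d, f (Fin.castLE h i) = ∑ i, f i := by
  refine (sum_map univ (Fin.castLEEmb h) f).symm.trans ?_
  refine sum_subset (subset_univ _) fun i _ hi => hf i ?_
  by_contra! hlt
  exact hi (mem_map.2 ⟨⟨i, hlt⟩, mem_univ _, rfl⟩)

theorem Fin.eq_zero_of_castLE {R : Type*} [Zero R] {d n : ℕ} (h : d ≤ n) {x : Fin n → R}
    (hhead : ∀ i : Fin d, x (Fin.castLE h i) = 0) (htail : ∀ i : Fin n, d ≤ i → x i = 0) :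
    x = 0 := by
  funext i
  by_cases hi : d ≤ i
  · exact htail i hi
  · exact hhead ⟨i, by omega⟩

theorem LinearIndependent.eq_zero_of_sum_castLE {R M : Type*} [Ring R] [AddCommGroup M]
    [Module R M] {n d₁ d₂ : ℕ} (h₁ : d₁ ≤ n) (h₂ : d₂ ≤ n) {v₁ v₂ : Fin n → M}
    (hv : LinearIndependent R
      (Sum.elim (fun i => v₁ (Fin.castLE h₁ i)) (fun i => v₂ (Fin.castLE h₂ i))))
    {x₁ x₂ : Fin n → R} (hx₁ : ∀ i : Fin n, d₁ ≤ i → x₁ i = 0)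
    (hx₂ : ∀ i : Fin n, d₂ ≤ i → x₂ i = 0)
    (hsum : ∑ i, x₁ i • v₁ i + ∑ i, x₂ i • v₂ i = 0) :
    x₁ = 0 ∧ x₂ = 0 := by
  have hcoeff := (Fintype.linearIndependent_iff.1 hv)
    (Sum.elim (fun i => x₁ (Fin.castLE h₁ i)) (fun i => x₂ (Fin.castLE h₂ i))) (by
      simp only [Fintype.sum_sum_type, Sum.elim_inl, Sum.elim_inr]
      rwa [Fin.sum_castLE_of_eq_zero h₁ (f := fun i => x₁ i • v₁ i)
          fun i hi => by rw [hx₁ i hi, zero_smul],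
        Fin.sum_castLE_of_eq_zero h₂ (f := fun i => x₂ i • v₂ i)
          fun i hi => by rw [hx₂ i hi, zero_smul]])
  exact ⟨Fin.eq_zero_of_castLE h₁ (fun i => hcoeff (.inl i)) hx₁,
    Fin.eq_zero_of_castLE h₂ (fun i => hcoeff (.inr i)) hx₂⟩

theorem Nat.div_pow_log_lt {b : ℕ} (hb : 1 < b) (k : ℕ) : k / b ^ Nat.log b k < b :=
  Nat.div_lt_of_lt_mul (by simpa [pow_succ, mul_comm] using Nat.lt_pow_succ_log_self hb k)

theorem div_pow_mod_eq_zero_of_mu1_le {b k i : ℕ} (hb : 1 < b) (hi : mu1 b k ≤ i) :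
    k / b ^ i % b = 0 := by
  rcases eq_or_ne k 0 with rfl | hk
  · simp
  have hlt : k < b ^ i := (Nat.lt_pow_succ_log_self hb k).trans_le
    (Nat.pow_le_pow_right hb.le (by simpa [mu1, hk] using hi))
  simp [Nat.div_eq_of_lt hlt]

theorem digitVec_apply_eq_zero_of_mu1_le {b n k : ℕ} (hb : 1 < b) {i : Fin n}
    (hi : mu1 b k ≤ i) : digitVec b n k i = 0 := by
  simp [digitVec, div_pow_mod_eq_zero_of_mu1_le hb hi]

theorem digitVec_ne_zero {b n k : ℕ} (hb : 1 < b) (hk : k ≠ 0) (hkn : mu1 b k ≤ n) :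
    digitVec b n k ≠ 0 := by
  have hlog : Nat.log b k < n := by simp only [mu1, hk, if_false] at hkn; omega
  have hpos : 0 < k / b ^ Nat.log b k :=
    Nat.div_pos (Nat.pow_log_le_self b hk) (by positivity)
  intro h
  have htop := congrFun h ⟨_, hlog⟩
  simp only [digitVec, Pi.zero_apply, Nat.mod_eq_of_lt (Nat.div_pow_log_lt hb k),
    ZMod.natCast_eq_zero_iff] at htop
  exact (Nat.div_pow_log_lt hb k).not_ge (Nat.le_of_dvd hpos htop)

/-- Let `b ≥ 2`, `m ≤ n`, and let `C₁, C₂` be `n × m` matrices over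
`ZMod b`.  Let `ρ` be a positive integer with `ρ ≤ n` such that for every `d₁, d₂ ∈ ℕ`
with `d₁ + d₂ = ρ`, the first `d₁` rows of `C₁` together with the first `d₂` rows of
`C₂` are linearly independent over `ZMod b`.  Then every `(k₁, k₂) ≠ (0, 0)` in the
dual net satisfies `μ₁(k₁) + μ₁(k₂) > ρ`. -/
theorem min_nrt_weight_of_row_independence (b m n : ℕ) (hb : 2 ≤ b)
    (C1 C2 : Matrix (Fin n) (Fin m) (ZMod b)) (ρ : ℕ) (hρn : ρ ≤ n)
    (hindep : ∀ d1 d2 : ℕ, ∀ hd : d1 + d2 = ρ,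
      LinearIndependent (ZMod b)
        (Sum.elim
          (fun i : Fin d1 => C1 ⟨(i : ℕ), by have := i.isLt; omega⟩)
          (fun i : Fin d2 => C2 ⟨(i : ℕ), by have := i.isLt; omega⟩)))
    (k1 k2 : ℕ)
    (hdual : Matrix.mulVec C1.transpose (digitVec b n k1) +
        Matrix.mulVec C2.transpose (digitVec b n k2) = 0)
    (hne : ¬(k1 = 0 ∧ k2 = 0)) :
    ρ < mu1 b k1 + mu1 b k2 := by
  by_contra! hle
  have hd₁ : mu1 b k1 ≤ n := by omega
  have hd₂ : ρ - mu1 b k1 ≤ n := by omega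
  have hdigits := LinearIndependent.eq_zero_of_sum_castLE hd₁ hd₂ (v₁ := C1) (v₂ := C2)
    (x₁ := digitVec b n k1) (x₂ := digitVec b n k2) (hindep _ _ (by omega))
    (fun _ hi => digitVec_apply_eq_zero_of_mu1_le hb hi)
    (fun _ hi => digitVec_apply_eq_zero_of_mu1_le hb (by omega))
    (by simpa only [Matrix.mulVec_transpose, Matrix.vecMul_eq_sum] using hdual)
  rcases not_and_or.1 hne with hk | hk
  · exact digitVec_ne_zero hb hk hd₁ hdigits.1
  · exact digitVec_ne_zero hb hk (by omega) hdigits.2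
end
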